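/- There is no continuous biadditive pairing ⊗̂: Z^1_0(ℙ^n) × Z^p_0(ℙ^m) → Z^p_0(ℙ^{nm+n+m}) for p ≥ 2 extending the tensor product of a line bundle and a rank-p bundle on linear cycles. Abstract form: there is no map μ: K(ℤ,2) × ∏_{i=1}^p K(ℤ,2i) → ∏_{i=1}^{nm+n+m} K(ℤ,2i) such that (π_1 × id)^* μ^*(i_4) = 1⊗i_4 + i_2⊗i_2 + i_4⊗1 in H^4(∏_{i=1}^n K(ℤ,2i) × ∏_{i=1}^p K(ℤ,2i); ℚ), where π_1: ∏_{i=1}^n K(ℤ,2i) → K(ℤ,2) is the first projection and n ≥ 2. -/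

import Mathlib

/-! Rational cohomology is encoded through Künneth identifications: `H^*(K(ℤ,2);ℚ) = ℚ[i₂]`,
`H^*(∏_{i=1}^r K(ℤ,2i);ℚ) = ℚ[i₂,…,i₂ᵣ]` with `i₂ = X 0`, `i₄ = X 1`, and `μ` is replaced by the
`ℚ`-algebra homomorphism `μ^*` it induces.

The image of `π₁^* ⊗ id` lies in the subalgebra generated by `i₂ ⊗ 1` and `1 ⊗ H^*`, so two
characters of the tensor product that agree there agree on the whole image. The characters that
kill `i₂ ⊗ 1` and all `1 ⊗ i₂ₖ` and send `i₄ ⊗ 1` to `0`, resp. `1`, take the values `0`, resp. `1`, on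
`1⊗i₄ + i₂⊗i₂ + i₄⊗1`, so it is not in the image. -/

open scoped TensorProduct

/-- `π₁^* : H^*(K(ℤ,2);ℚ) → H^*(∏_{i=1}^n K(ℤ,2i);ℚ)`, `i₂ ↦ i₂`. -/
noncomputable def pi1star (n : ℕ) (hn : 0 < n) :
    Polynomial ℚ →ₐ[ℚ] MvPolynomial (Fin n) ℚ :=
  Polynomial.aeval (MvPolynomial.X ⟨0, hn⟩)

open MvPolynomial Algebra.TensorProduct

theorem Algebra.TensorProduct.productMap_comp_map {R A B C D S : Type*} [CommSemiring R]
    [Semiring A] [Semiring B] [Semiring C] [Semiring D] [CommSemiring S] [Algebra R A]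
    [Algebra R B] [Algebra R C] [Algebra R D] [Algebra R S]
    (φ : C →ₐ[R] S) (ψ : D →ₐ[R] S) (f : A →ₐ[R] C) (g : B →ₐ[R] D) :
    (productMap φ ψ).comp (map f g) = productMap (φ.comp f) (ψ.comp g) := by
  ext <;> rfl

theorem comp_pi1star_eq_of_apply_X_zero_eq {n : ℕ} (hn : 0 < n) {S : Type*} [Semiring S]
    [Algebra ℚ S] {φ φ' : MvPolynomial (Fin n) ℚ →ₐ[ℚ] S} (h : φ (X ⟨0, hn⟩) = φ' (X ⟨0, hn⟩)) :
    φ.comp (pi1star n hn) = φ'.comp (pi1star n hn) :=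
  Polynomial.algHom_ext (by simpa [pi1star] using h)

theorem productMap_map_pi1star_eq_of_apply_X_zero_eq {n : ℕ} (hn : 0 < n) {B S : Type*}
    [Semiring B] [CommSemiring S] [Algebra ℚ B] [Algebra ℚ S]
    {φ φ' : MvPolynomial (Fin n) ℚ →ₐ[ℚ] S} (ψ : B →ₐ[ℚ] S)
    (h : φ (X ⟨0, hn⟩) = φ' (X ⟨0, hn⟩)) (y : Polynomial ℚ ⊗[ℚ] B) :
    productMap φ ψ (map (pi1star n hn) (AlgHom.id ℚ B) y) =
      productMap φ' ψ (map (pi1star n hn) (AlgHom.id ℚ B) y) := by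
  simp only [← AlgHom.comp_apply, productMap_comp_map, comp_pi1star_eq_of_apply_X_zero_eq hn h]

theorem no_general_tensor_pairing (n m p : ℕ) (hn : 2 ≤ n) (hp : 2 ≤ p) :
    ¬ ∃ μstar : MvPolynomial (Fin (n * m + n + m)) ℚ →ₐ[ℚ]
        (Polynomial ℚ ⊗[ℚ] MvPolynomial (Fin p) ℚ),
      (Algebra.TensorProduct.map (pi1star n (by omega))
          (AlgHom.id ℚ (MvPolynomial (Fin p) ℚ)))
        (μstar (MvPolynomial.X ⟨1, by nlinarith⟩)) =
      1 ⊗ₜ[ℚ] (MvPolynomial.X ⟨1, by omega⟩ : MvPolynomial (Fin p) ℚ) +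
        (MvPolynomial.X ⟨0, by omega⟩ : MvPolynomial (Fin n) ℚ) ⊗ₜ[ℚ]
          (MvPolynomial.X ⟨0, by omega⟩ : MvPolynomial (Fin p) ℚ) +
        (MvPolynomial.X ⟨1, by omega⟩ : MvPolynomial (Fin n) ℚ) ⊗ₜ[ℚ] 1 := by
  rintro ⟨μstar, h⟩
  let φ (t : ℚ) : MvPolynomial (Fin n) ℚ →ₐ[ℚ] ℚ := aeval (Pi.single ⟨1, by omega⟩ t)
  let ψ : MvPolynomial (Fin p) ℚ →ₐ[ℚ] ℚ := aeval 0
  have h₀ := congrArg (productMap (φ 0) ψ) h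
  have h₁ := congrArg (productMap (φ 1) ψ) h
  rw [productMap_map_pi1star_eq_of_apply_X_zero_eq _ ψ (φ' := φ 0) (by simp [φ])] at h₁
  simpa [φ, ψ] using h₁.symm.trans h₀
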